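/- Let A ∈ ℝ^{N×N} be Hurwitz and P = Pᵀ ≻ 0 the unique solution of the Lyapunov equation AᵀP + PA = −I. Let φ : ℝⁿ → ℝᴺ be C² with Jacobian Φ(x) = Dφ(x) of full column rank n for all x, satisfying Φ(x) f(x) = A φ(x) for all x. Define M(x) = Φ(x)ᵀ P Φ(x). Then M(x) ≻ 0 for all x, and along the flow, (d/dt)M(X(x,t)) + F(X(x,t))ᵀ M(X(x,t)) + M(X(x,t)) F(X(x,t)) = −Φ(X(x,t))ᵀ Φ(X(x,t)) ≺ 0, where F(x) = Df(x). In particular, the system ẋ = f(x) is asymptotically contracting with metric M. -/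

import Mathlib

/-! Differentiating the identity `Φ f = A φ` along `f` and using the symmetry of `D²φ` gives
`d/dt Φ(X t) = A Φ - Φ F` along trajectories. Hence `Ṁ + FᵀM + MF` is the pullback
`Φᵀ (AᵀP + PA) Φ = -ΦᵀΦ` of the Lyapunov form, and `ΦᵀPΦ`, `ΦᵀΦ` are positive definite because
`Φ` is injective. -/

open Matrix MeasureTheory

/-- Jacobian matrix of a map between finite-dimensional spaces. -/
noncomputable def jac {n N : ℕ} (φ : (Fin n → ℝ) → (Fin N → ℝ)) (x : Fin n → ℝ) :
    Matrix (Fin N) (Fin n) ℝ :=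
  Matrix.of fun i j => fderiv ℝ φ x (Pi.single j 1) i

/-- A real square matrix is Hurwitz if all its (complex) eigenvalues have
negative real part. -/
def Hurwitz {N : ℕ} (A : Matrix (Fin N) (Fin N) ℝ) : Prop :=
  ∀ μ ∈ spectrum ℂ (A.map (Complex.ofReal ·)), μ.re < 0

/-- Euclidean norm on `Fin n → ℝ`. -/
noncomputable def euclNorm {n : ℕ} (x : Fin n → ℝ) : ℝ :=
  Real.sqrt (∑ i, x i ^ 2)

theorem Matrix.mulVec_injective_of_rank_eq_card {K m n : Type*} [Field K] [Fintype n]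
    {B : Matrix m n K} (h : B.rank = Fintype.card n) : Function.Injective B.mulVec := by
  rw [mulVec_injective_iff, linearIndependent_iff_card_eq_finrank_span, ← h,
    rank_eq_finrank_span_cols]
  rfl

theorem Matrix.pullback_lyapunov {R n N : Type*} [CommRing R] [Fintype n] [Fintype N]
    (A P : Matrix N N R) (Φ : Matrix N n R) (F : Matrix n n R) :
    ((A * Φ - Φ * F)ᵀ * P * Φ + Φᵀ * P * (A * Φ - Φ * F)) + Fᵀ * (Φᵀ * P * Φ) +
        Φᵀ * P * Φ * F = Φᵀ * (Aᵀ * P + P * A) * Φ := by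
  simp only [transpose_sub, transpose_mul, Matrix.sub_mul, Matrix.mul_sub, Matrix.add_mul,
    Matrix.mul_add, Matrix.mul_assoc]
  abel

theorem Matrix.PosDef.transpose_mul_mul_of_rank_eq_card {m n : Type*} [Fintype m] [Fintype n]
    {P : Matrix m m ℝ} (hP : P.PosDef) {B : Matrix m n ℝ} (hB : B.rank = Fintype.card n) :
    (Bᵀ * P * B).PosDef := by
  rw [← conjTranspose_eq_transpose_of_trivial]
  exact hP.conjTranspose_mul_mul_same (mulVec_injective_of_rank_eq_card hB)

section EntrywiseDeriv

variable {𝕜 : Type*} [NontriviallyNormedField 𝕜] {l m k : Type*}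

/-- `Matrix m k 𝕜` carries no canonical norm, so derivatives of matrix-valued curves are taken
entry by entry. -/
def HasEntrywiseDerivAt (B : 𝕜 → Matrix m k 𝕜) (B' : Matrix m k 𝕜) (t : 𝕜) : Prop :=
  ∀ i j, HasDerivAt (fun s => B s i j) (B' i j) t

theorem HasDerivAt.hasEntrywiseDerivAt_toMatrix' [Fintype m] [Fintype k] [DecidableEq k]
    {B : 𝕜 → (k → 𝕜) →L[𝕜] (m → 𝕜)} {B' : (k → 𝕜) →L[𝕜] (m → 𝕜)} {t : 𝕜}
    (h : HasDerivAt B B' t) :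
    HasEntrywiseDerivAt (fun s => LinearMap.toMatrix' (B s : (k → 𝕜) →ₗ[𝕜] (m → 𝕜)))
      (LinearMap.toMatrix' (B' : (k → 𝕜) →ₗ[𝕜] (m → 𝕜))) t := fun a i => by
  have hentry := ((ContinuousLinearMap.proj (R := 𝕜) (φ := fun _ : m => 𝕜) a).comp
    (ContinuousLinearMap.apply 𝕜 _ (Pi.single i 1))).hasFDerivAt.comp_hasDerivAt t h
  exact hentry

namespace HasEntrywiseDerivAt

variable {B : 𝕜 → Matrix m k 𝕜} {B' : Matrix m k 𝕜} {t : 𝕜}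

theorem deriv (h : HasEntrywiseDerivAt B B' t) :
    Matrix.of (fun i j => deriv (fun s => B s i j) t) = B' := by
  ext i j
  exact (h i j).deriv

theorem const (C : Matrix m k 𝕜) : HasEntrywiseDerivAt (fun _ => C) 0 t :=
  fun _ _ => hasDerivAt_const _ _

theorem transpose (h : HasEntrywiseDerivAt B B' t) :
    HasEntrywiseDerivAt (fun s => (B s)ᵀ) B'ᵀ t :=
  fun i j => h j i

theorem mul [Fintype k] {C : 𝕜 → Matrix k l 𝕜} {C' : Matrix k l 𝕜}
    (hB : HasEntrywiseDerivAt B B' t) (hC : HasEntrywiseDerivAt C C' t) :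
    HasEntrywiseDerivAt (fun s => B s * C s) (B' * C t + B t * C') t := by
  intro i j
  simp only [Matrix.add_apply, Matrix.mul_apply, ← Finset.sum_add_distrib]
  exact HasDerivAt.fun_sum fun a _ => (hB i a).mul (hC a j)

theorem transpose_mul_mul_self [Fintype m] (h : HasEntrywiseDerivAt B B' t)
    (P : Matrix m m 𝕜) :
    HasEntrywiseDerivAt (fun s => (B s)ᵀ * P * B s) (B'ᵀ * P * B t + (B t)ᵀ * P * B') t := by
  simpa using (h.transpose.mul (const P)).mul h

end HasEntrywiseDerivAt

end EntrywiseDeriv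

section SecondDerivative

variable {𝕜 E F : Type*} [RCLike 𝕜] [NormedAddCommGroup E] [NormedSpace 𝕜 E]
  [NormedAddCommGroup F] [NormedSpace 𝕜 F] {φ : E → F} {f : E → E} {L : F →L[𝕜] F}

theorem fderiv_fderiv_apply_eq_of_fderiv_apply_eq (hφ : ContDiff 𝕜 2 φ)
    (hf : Differentiable 𝕜 f) (hL : ∀ x, fderiv 𝕜 φ x (f x) = L (φ x)) (y : E) :
    fderiv 𝕜 (fderiv 𝕜 φ) y (f y) = L ∘L fderiv 𝕜 φ y - fderiv 𝕜 φ y ∘L fderiv 𝕜 f y := by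
  have hφ' : Differentiable 𝕜 (fderiv 𝕜 φ) :=
    (hφ.fderiv_right (by norm_num)).differentiable one_ne_zero
  have hd : HasFDerivAt (fun z => fderiv 𝕜 φ z (f z))
      (fderiv 𝕜 φ y ∘L fderiv 𝕜 f y + (fderiv 𝕜 (fderiv 𝕜 φ) y).flip (f y)) y :=
    (hφ' y).hasFDerivAt.clm_apply (hf y).hasFDerivAt
  have hd' : HasFDerivAt (fun z => L (φ z)) (L ∘L fderiv 𝕜 φ y) y :=
    L.hasFDerivAt.comp y ((hφ.differentiable (by norm_num)) y).hasFDerivAt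
  have hsymm := ((hφ.contDiffAt (x := y)).isSymmSndFDerivAt (by simp)).eq
  ext v
  have hv := congrArg (· v) ((funext hL ▸ hd).unique hd')
  simp only [_root_.add_apply, ContinuousLinearMap.comp_apply, ContinuousLinearMap.flip_apply] at hv
  rw [hsymm, _root_.sub_apply, ContinuousLinearMap.comp_apply,
    ContinuousLinearMap.comp_apply, ← hv]
  abel

end SecondDerivative

section Jacobian

variable {n N : ℕ}

theorem jac_eq_toMatrix' (φ : (Fin n → ℝ) → (Fin N → ℝ)) (x : Fin n → ℝ) :
    jac φ x = LinearMap.toMatrix' (fderiv ℝ φ x : (Fin n → ℝ) →ₗ[ℝ] (Fin N → ℝ)) :=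
  rfl

theorem jac_mulVec (φ : (Fin n → ℝ) → (Fin N → ℝ)) (x v : Fin n → ℝ) :
    jac φ x *ᵥ v = fderiv ℝ φ x v := by
  rw [jac_eq_toMatrix', LinearMap.toMatrix'_mulVec]
  rfl

theorem hasEntrywiseDerivAt_jac_comp {f : (Fin n → ℝ) → (Fin n → ℝ)}
    {φ : (Fin n → ℝ) → (Fin N → ℝ)} {A : Matrix (Fin N) (Fin N) ℝ}
    (hf : Differentiable ℝ f) (hφ : ContDiff ℝ 2 φ)
    (hPDE : ∀ x, jac φ x *ᵥ f x = A *ᵥ φ x) {X : ℝ → (Fin n → ℝ)} {t : ℝ}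
    (hX : HasDerivAt X (f (X t)) t) :
    HasEntrywiseDerivAt (fun s => jac φ (X s))
      (A * jac φ (X t) - jac φ (X t) * jac f (X t)) t := by
  set L := LinearMap.toContinuousLinearMap (Matrix.toLin' A)
  have hL : ∀ x, fderiv ℝ φ x (f x) = L (φ x) := fun x => by
    simpa [← jac_mulVec, L] using hPDE x
  have hφ' : Differentiable ℝ (fderiv ℝ φ) :=
    (hφ.fderiv_right (by norm_num)).differentiable one_ne_zero
  have hD := (hφ' (X t)).hasFDerivAt.comp_hasDerivAt t hX
  rw [fderiv_fderiv_apply_eq_of_fderiv_apply_eq hφ hf hL] at hD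
  have hmat : A * jac φ (X t) - jac φ (X t) * jac f (X t) = LinearMap.toMatrix'
      ((L ∘L fderiv ℝ φ (X t) - fderiv ℝ φ (X t) ∘L fderiv ℝ f (X t) :
        (Fin n → ℝ) →L[ℝ] (Fin N → ℝ)) : (Fin n → ℝ) →ₗ[ℝ] (Fin N → ℝ)) := by
    simp [jac_eq_toMatrix', L, LinearMap.toMatrix'_comp]
  rw [hmat]
  exact hD.hasEntrywiseDerivAt_toMatrix'

end Jacobian

theorem koopman_metric_contraction_general
    {n N : ℕ}
    (f : (Fin n → ℝ) → (Fin n → ℝ)) (hf : ContDiff ℝ 2 f)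
    (φ : (Fin n → ℝ) → (Fin N → ℝ)) (hφ : ContDiff ℝ 2 φ)
    (A : Matrix (Fin N) (Fin N) ℝ)
    (P : Matrix (Fin N) (Fin N) ℝ) (hPpos : P.PosDef)
    (hLyap : Aᵀ * P + P * A = -1)
    (hPDE : ∀ x, (jac φ x).mulVec (f x) = A.mulVec (φ x))
    (hrank : ∀ x, (jac φ x).rank = n)
    (M : (Fin n → ℝ) → Matrix (Fin n) (Fin n) ℝ)
    (hM : ∀ x, M x = (jac φ x)ᵀ * P * jac φ x)
    (X : (Fin n → ℝ) → ℝ → (Fin n → ℝ))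
    (hXode : ∀ x t, HasDerivAt (X x) (f (X x t)) t) :
    (∀ x, (M x).PosDef) ∧
    (∀ x t,
      (Matrix.of fun i j => deriv (fun s => M (X x s) i j) t) +
          (jac f (X x t))ᵀ * M (X x t) + M (X x t) * jac f (X x t) =
        -((jac φ (X x t))ᵀ * jac φ (X x t)) ∧
      ((jac φ (X x t))ᵀ * jac φ (X x t)).PosDef) := by
  have hrank' : ∀ x, (jac φ x).rank = Fintype.card (Fin n) := by simpa using hrank
  refine ⟨fun x => hM x ▸ hPpos.transpose_mul_mul_of_rank_eq_card (hrank' x),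
    fun x t => ⟨?_, by simpa using PosDef.one.transpose_mul_mul_of_rank_eq_card (hrank' _)⟩⟩
  have hMdot := (hasEntrywiseDerivAt_jac_comp (hf.differentiable (by norm_num)) hφ hPDE
    (hXode x t)).transpose_mul_mul_self P
  simp only [← hM] at hMdot
  rw [hMdot.deriv, hM, pullback_lyapunov, hLyap]
  simp

/-- the metric `M = ΦᵀPΦ` is positive definite and satisfies
`Ṁ + FᵀM + MF = -ΦᵀΦ ≺ 0` along the flow. -/
theorem koopman_metric_contraction
    {n N : ℕ}
    (f : (Fin n → ℝ) → (Fin n → ℝ)) (hf : ContDiff ℝ 2 f)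
    (φ : (Fin n → ℝ) → (Fin N → ℝ)) (hφ : ContDiff ℝ 2 φ)
    (A : Matrix (Fin N) (Fin N) ℝ) (hA : Hurwitz A)
    (P : Matrix (Fin N) (Fin N) ℝ) (hPsym : Pᵀ = P) (hPpos : P.PosDef)
    (hLyap : Aᵀ * P + P * A = -1)
    (hPDE : ∀ x, (jac φ x).mulVec (f x) = A.mulVec (φ x))
    (hrank : ∀ x, (jac φ x).rank = n)
    (M : (Fin n → ℝ) → Matrix (Fin n) (Fin n) ℝ)
    (hM : ∀ x, M x = (jac φ x)ᵀ * P * jac φ x)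
    (X : (Fin n → ℝ) → ℝ → (Fin n → ℝ))
    (hX0 : ∀ x, X x 0 = x)
    (hXode : ∀ x t, HasDerivAt (X x) (f (X x t)) t) :
    (∀ x, (M x).PosDef) ∧
    (∀ x t,
      (Matrix.of fun i j => deriv (fun s => M (X x s) i j) t) +
          (jac f (X x t))ᵀ * M (X x t) + M (X x t) * jac f (X x t) =
        -((jac φ (X x t))ᵀ * jac φ (X x t)) ∧
      ((jac φ (X x t))ᵀ * jac φ (X x t)).PosDef) :=
  koopman_metric_contraction_general f hf φ hφ A P hPpos hLyap hPDE hrank M hM X hXode
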